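/- Let E be a directed graph on a vertex type V, let v, w be vertices, and let x be a vertex not in Z = {z | there is a path from w to z under E and a path from z to v under E}. Then for every vertex y, x and y are strongly connected under E + (v,w) if and only if x and y are strongly connected under E. That is, adding the arc (v,w) changes the strong component of no vertex outside Z: at most the single new component with vertex set Z is created. -/

import Mathlib

namespace Relation

variable {V : Type*} {E : V → V → Prop} {v w a b : V}

theorem reflTransGen_addArc_iff :
    ReflTransGen (fun a b => E a b ∨ (a = v ∧ b = w)) a b ↔
      ReflTransGen E a b ∨ (ReflTransGen E a v ∧ ReflTransGen E w b) := by
  constructor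
  · intro h
    induction h with
    | refl => exact .inl .refl
    | tail _ hbc ih =>
      rcases hbc with hE | ⟨rfl, rfl⟩
      · exact ih.imp (·.tail hE) fun ⟨hav, hwb⟩ => ⟨hav, hwb.tail hE⟩
      · exact .inr ⟨ih.elim id (·.1), .refl⟩
  · have lift {c d : V} : ReflTransGen E c d →
        ReflTransGen (fun a b => E a b ∨ (a = v ∧ b = w)) c d :=
      ReflTransGen.mono (fun _ _ => Or.inl) _ _
    rintro (hab | ⟨hav, hwb⟩)
    · exact lift hab
    · exact ((lift hav).tail (.inr ⟨rfl, rfl⟩)).trans (lift hwb)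

end Relation

open Relation in
/-- Adding the arc `(v,w)` changes the strong component of no vertex outside
`Z = {z | w ⟶* z and z ⟶* v under E}`: for `x ∉ Z`, `x` is strongly
connected to `y` in `E + (v,w)` iff it is in `E`. Hence at most the single
new component with vertex set `Z` is created. -/
theorem addArc_strong_component_unchanged_outside
    {V : Type*} (E : V → V → Prop) (v w : V) (x : V)
    (hx : x ∉ {z | Relation.ReflTransGen E w z ∧ Relation.ReflTransGen E z v}) :
    ∀ y : V,
      (Relation.ReflTransGen (fun a b => E a b ∨ (a = v ∧ b = w)) x y ∧
       Relation.ReflTransGen (fun a b => E a b ∨ (a = v ∧ b = w)) y x) ↔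
      (Relation.ReflTransGen E x y ∧ Relation.ReflTransGen E y x) := by
  intro y
  have hx : ReflTransGen E w x → ¬ReflTransGen E x v := fun hwx hxv => hx ⟨hwx, hxv⟩
  simp only [reflTransGen_addArc_iff]
  constructor
  · rintro ⟨hxy | ⟨hxv, hwy⟩, hyx | ⟨hyv, hwx⟩⟩
    · exact ⟨hxy, hyx⟩
    · exact absurd (hxy.trans hyv) (hx hwx)
    · exact absurd hxv (hx (hwy.trans hyx))
    · exact absurd hxv (hx hwx)
  · exact fun ⟨hxy, hyx⟩ => ⟨.inl hxy, .inl hyx⟩
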